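/- Fix 0 < a ≤ α ≤ 1 and 0 < β ≤ 1, and for a vector b ∈ ℝ³ of length β with component bₓ along a, define γ_M = (β/2)(α²−a²)/(αβ − a bₓ) and γ_m = (β/2)((2−α−β)² − ‖a n + b‖²)/(αβ − a bₓ − 2β), where n is the unit vector along a (assuming the denominators are nonzero, which holds unless a = α and b is parallel to a). Then the qubit effects A = (1/2)(α·1 + a n·σ) and B = (1/2)(β·1 + b·σ) are coexistent if and only if γ_m ≤ γ_M. -/

import Mathlib

open scoped ComplexOrder RealInnerProductSpace

/-- The vector of Pauli matrices contracted with a real 3-vector: `v · σ`. -/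
noncomputable def pauli (v : EuclideanSpace ℝ (Fin 3)) : Matrix (Fin 2) (Fin 2) ℂ :=
  (v 0 : ℂ) • !![0, 1; 1, 0] + (v 1 : ℂ) • !![0, -Complex.I; Complex.I, 0] +
    (v 2 : ℂ) • !![1, 0; 0, -1]

/-- The qubit effect `(1/2)(α·1 + v·σ)`. -/
noncomputable def qubitEffect (α : ℝ) (v : EuclideanSpace ℝ (Fin 3)) :
    Matrix (Fin 2) (Fin 2) ℂ :=
  (1 / 2 : ℂ) • ((α : ℂ) • (1 : Matrix (Fin 2) (Fin 2) ℂ) + pauli v)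

/-- Effects `A` and `B` are coexistent: there is a four-outcome POVM `(G₁,G₂,G₃,G₄)`
with `A = G₁ + G₂` and `B = G₁ + G₃`. -/
def Coexistent (A B : Matrix (Fin 2) (Fin 2) ℂ) : Prop :=
  ∃ G₁ G₂ G₃ G₄ : Matrix (Fin 2) (Fin 2) ℂ,
    G₁.PosSemidef ∧ G₂.PosSemidef ∧ G₃.PosSemidef ∧ G₄.PosSemidef ∧
    G₁ + G₂ + G₃ + G₄ = 1 ∧ A = G₁ + G₂ ∧ B = G₁ + G₃

lemma qubitEffect_eq (γ : ℝ) (g : EuclideanSpace ℝ (Fin 3)) :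
    qubitEffect γ g = !![(((γ + g 2)/2 : ℝ) : ℂ), star (((g 0 + g 1 * Complex.I)/2 : ℂ));
      ((g 0 + g 1 * Complex.I)/2 : ℂ), (((γ - g 2)/2 : ℝ) : ℂ)] := by
  ext i j
  fin_cases i <;> fin_cases j <;>
    simp [qubitEffect, pauli, Matrix.one_apply] <;> push_cast <;> ring

lemma form_eval (p q : ℝ) (z : ℂ) (x : Fin 2 → ℂ) :
    dotProduct (star x) ((!![(p:ℂ), star z; z, (q:ℂ)]).mulVec x) =
      ((p * Complex.normSq (x 0) + q * Complex.normSq (x 1)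
        + 2 * (z * x 0 * (starRingEnd ℂ) (x 1)).re : ℝ) : ℂ) := by
  simp [dotProduct, Matrix.mulVec, Fin.sum_univ_two, Complex.ext_iff,
    Complex.normSq_apply]
  constructor <;> ring

lemma psd2 (p q : ℝ) (z : ℂ) :
    (!![(p:ℂ), star z; z, (q:ℂ)]).PosSemidef ↔
      0 ≤ p ∧ 0 ≤ q ∧ Complex.normSq z ≤ p * q := by
  rw [Matrix.posSemidef_iff_dotProduct_mulVec]
  constructor
  · rintro ⟨hH, hQ⟩
    have hp : 0 ≤ p := by
      have := hQ ![1, 0]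
      rw [form_eval] at this
      rw [Complex.zero_le_real] at this
      simpa using this
    have hq : 0 ≤ q := by
      have := hQ ![0, 1]
      rw [form_eval] at this
      rw [Complex.zero_le_real] at this
      simpa using this
    refine ⟨hp, hq, ?_⟩
    rcases eq_or_ne z 0 with rfl | hz
    · simpa using mul_nonneg hp hq
    · have key : ∀ t : ℝ, 0 ≤ q * (t * t) + (-2 * Complex.normSq z) * t
          + Complex.normSq z * p := by
        intro t
        have := hQ ![-(starRingEnd ℂ) z, (t : ℂ)]
        rw [form_eval] at this
        rw [Complex.zero_le_real] at this
        simp [Complex.normSq_conj, Complex.normSq_ofReal, Complex.mul_conj] at this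
        nlinarith [this]
      have hd := discrim_le_zero key
      rw [discrim] at hd
      have hz' : 0 < Complex.normSq z := Complex.normSq_pos.mpr hz
      nlinarith [hd, hz']
  · rintro ⟨hp, hq, hpq⟩
    constructor
    · ext i j
      fin_cases i <;> fin_cases j <;> simp
    · intro x
      rw [form_eval, Complex.zero_le_real]
      set r0 := ‖x 0‖
      set r1 := ‖x 1‖
      have h1 : Complex.normSq (x 0) = r0 ^ 2 := (Complex.sq_norm _).symm
      have h2 : Complex.normSq (x 1) = r1 ^ 2 := (Complex.sq_norm _).symm
      have h3 : -(‖z‖ * r0 * r1) ≤ (z * x 0 * (starRingEnd ℂ) (x 1)).re := by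
        have := (abs_le.1 (Complex.abs_re_le_norm (z * x 0 * (starRingEnd ℂ) (x 1)))).1
        calc -(‖z‖ * r0 * r1) = -‖z * x 0 * (starRingEnd ℂ) (x 1)‖ := by
              simp [map_mul, r0, r1]; try ring
          _ ≤ _ := this
      have hzle : ‖z‖ ≤ Real.sqrt p * Real.sqrt q := by
        rw [Complex.norm_def, ← Real.sqrt_mul hp]
        exact Real.sqrt_le_sqrt hpq
      rw [h1, h2]
      nlinarith [sq_nonneg (Real.sqrt p * r0 - Real.sqrt q * r1), Real.sq_sqrt hp,
        Real.sq_sqrt hq, norm_nonneg (x 0), norm_nonneg (x 1),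
        mul_nonneg (norm_nonneg (x 0)) (norm_nonneg (x 1)), h3, hzle,
        mul_le_mul_of_nonneg_right hzle
          (mul_nonneg (norm_nonneg (x 0)) (norm_nonneg (x 1)))]

lemma norm_sq_eq3 (g : EuclideanSpace ℝ (Fin 3)) :
    ‖g‖ ^ 2 = g 0 ^ 2 + g 1 ^ 2 + g 2 ^ 2 := by
  rw [EuclideanSpace.real_norm_sq_eq]
  simp [Fin.sum_univ_three]

lemma qubitEffect_psd (γ : ℝ) (g : EuclideanSpace ℝ (Fin 3)) :
    (qubitEffect γ g).PosSemidef ↔ ‖g‖ ≤ γ := by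
  rw [qubitEffect_eq, psd2]
  have hns : Complex.normSq ((g 0 + g 1 * Complex.I)/2 : ℂ) = (g 0 ^ 2 + g 1 ^ 2) / 4 := by
    simp [Complex.normSq_apply, Complex.div_re, Complex.div_im, Complex.normSq_apply]
    ring
  rw [hns]
  have h3 := norm_sq_eq3 g
  have hnn := norm_nonneg g
  constructor
  · rintro ⟨h1, h2, h4⟩
    nlinarith [h1, h2, h4, h3, hnn]
  · intro h
    have hg2 : |g 2| ≤ ‖g‖ := by
      have : g 2 ^ 2 ≤ ‖g‖ ^ 2 := by nlinarith [sq_nonneg (g 0), sq_nonneg (g 1)]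
      exact abs_le_abs (by nlinarith [abs_nonneg (g 2), le_abs_self (g 2)]) (by nlinarith [neg_abs_le (g 2)]) |>.trans (le_of_eq (abs_of_nonneg hnn))
    refine ⟨by nlinarith [abs_le.1 hg2], by nlinarith [abs_le.1 hg2], by nlinarith [abs_le.1 hg2]⟩

lemma qubitEffect_add (γ₁ γ₂ : ℝ) (g₁ g₂ : EuclideanSpace ℝ (Fin 3)) :
    qubitEffect γ₁ g₁ + qubitEffect γ₂ g₂ = qubitEffect (γ₁ + γ₂) (g₁ + g₂) := by
  ext i j
  fin_cases i <;> fin_cases j <;>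
    simp [qubitEffect_eq, PiLp.add_apply] <;> push_cast <;> ring

lemma qubitEffect_two_zero : qubitEffect 2 (0 : EuclideanSpace ℝ (Fin 3)) = 1 := by
  ext i j
  fin_cases i <;> fin_cases j <;>
    simp [qubitEffect_eq, Matrix.one_apply]

lemma exists_bloch (G : Matrix (Fin 2) (Fin 2) ℂ) (h : G.IsHermitian) :
    ∃ γ : ℝ, ∃ g : EuclideanSpace ℝ (Fin 3), G = qubitEffect γ g := by
  refine ⟨(G 0 0).re + (G 1 1).re,
    (WithLp.equiv 2 (Fin 3 → ℝ)).symm ![2*(G 1 0).re, 2*(G 1 0).im, (G 0 0).re - (G 1 1).re], ?_⟩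
  have h00 := h.apply 0 0
  have h11 := h.apply 1 1
  have h01 := h.apply 1 0
  rw [qubitEffect_eq]
  ext i j
  fin_cases i <;> fin_cases j <;>
    simp [WithLp.equiv_symm_apply, PiLp.toLp_apply, Complex.ext_iff] at h00 h11 h01 ⊢ <;>
    (try constructor) <;> linarith [h00, h11, h01.1, h01.2]

lemma le_of_sq_le_sq' {x c : ℝ} (h : x ^ 2 ≤ c ^ 2) (hx : 0 ≤ x) (hc : 0 ≤ c) : x ≤ c := by
  nlinarith


lemma touch_aux (β γ s ip : ℝ) (d : ℝ) (h3 : 0 < β) (c1 : s ≤ γ) (c3 : d ≤ β - γ)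
    (hd0 : 0 ≤ d) (hs0 : 0 ≤ s) (hexp : d ^ 2 = β ^ 2 - 2 * ip + s ^ 2) (hCS : ip ≤ β * s) :
    s = γ ∧ ip = β * γ := by
  have hγβ : γ ≤ β := by linarith
  have hsq : d ^ 2 ≤ (β - γ) ^ 2 := by nlinarith
  have hsγ : s = γ := by
    refine le_antisymm c1 ?_
    nlinarith [sq_nonneg (γ - s)]
  subst hsγ
  refine ⟨rfl, le_antisymm hCS ?_⟩
  nlinarith

lemma sc_fwd (a α β bx γ t γM γm : ℝ) (h3 : 0 < β) (hγt : t * β = γ)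
    (hD1 : 0 < α * β - a * bx) (hD2 : α * β - a * bx - 2 * β < 0)
    (hγM : γM = (β / 2) * (α ^ 2 - a ^ 2) / (α * β - a * bx))
    (hγm : γm = (β / 2) * ((2 - α - β) ^ 2 - (a ^ 2 + 2 * a * bx + β ^ 2)) / (α * β - a * bx - 2 * β))
    (hsq2 : a ^ 2 - 2 * t * (a * bx) + t ^ 2 * β ^ 2 ≤ (α - γ) ^ 2)
    (hsq4 : (a ^ 2 + 2 * a * bx + β ^ 2) - 2 * t * (a * bx + β ^ 2) + t ^ 2 * β ^ 2
      ≤ (2 - α - β + γ) ^ 2) :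
    γm ≤ γM := by
  rw [← hγt] at hsq2 hsq4
  have hle1 : γ ≤ γM := by
    rw [hγM, le_div_iff₀ hD1, ← hγt]
    nlinarith [mul_le_mul_of_nonneg_left hsq2 (by positivity : (0:ℝ) ≤ β / 2)]
  have hle2 : γm ≤ γ := by
    rw [hγm, div_le_iff_of_neg hD2, ← hγt]
    nlinarith [mul_le_mul_of_nonneg_left hsq4 (by positivity : (0:ℝ) ≤ β / 2)]
  linarith

lemma sc_bwd_ab (a α β bx γm : ℝ) (h0 : 0 < a) (h1 : a ≤ α) (h2 : α ≤ 1) (h3 : 0 < β)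
    (h4 : β ≤ 1) (hbx1 : -β ≤ bx) (hbx2 : bx ≤ β) (hD2 : α * β - a * bx - 2 * β < 0)
    (hγm : γm = (β / 2) * ((2 - α - β) ^ 2 - (a ^ 2 + 2 * a * bx + β ^ 2)) / (α * β - a * bx - 2 * β)) :
    γm ≤ α ∧ γm ≤ β := by
  constructor
  · rw [hγm, div_le_iff_of_neg hD2]
    rcases le_total β α with hba | hba
    · nlinarith [mul_nonneg (mul_nonneg h0.le (by linarith : (0:ℝ) ≤ α - β))
        (by linarith : (0:ℝ) ≤ bx + β),
        mul_nonneg (by linarith : (0:ℝ) ≤ 1 - α) (by linarith : (0:ℝ) ≤ α - β),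
        mul_nonneg (by linarith : (0:ℝ) ≤ α - a) (by linarith : (0:ℝ) ≤ α + a + 2 * (α - β)),
        mul_pos h3 h3]
    · nlinarith [mul_nonneg (mul_nonneg h0.le (by linarith : (0:ℝ) ≤ β - α))
        (by linarith : (0:ℝ) ≤ β - bx),
        mul_nonneg (by linarith : (0:ℝ) ≤ α - a) (by linarith : (0:ℝ) ≤ a + 2 * β - α),
        mul_pos h3 h3]
  · rw [hγm, div_le_iff_of_neg hD2]
    nlinarith [mul_nonneg h3.le (mul_nonneg (by linarith : (0:ℝ) ≤ 2 - α - a)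
      (by linarith : (0:ℝ) ≤ 2 - α + a))]

lemma sc_bwd_sq (a α β bx γ t γM γm : ℝ) (h3 : 0 < β) (hγt : t * β = γ)
    (hD1 : 0 < α * β - a * bx) (hD2 : α * β - a * bx - 2 * β < 0)
    (hγM : γM = (β / 2) * (α ^ 2 - a ^ 2) / (α * β - a * bx))
    (hγm : γm = (β / 2) * ((2 - α - β) ^ 2 - (a ^ 2 + 2 * a * bx + β ^ 2)) / (α * β - a * bx - 2 * β))
    (hM : γ ≤ γM) (hm : γm ≤ γ) :
    a ^ 2 - 2 * t * (a * bx) + t ^ 2 * β ^ 2 ≤ (α - γ) ^ 2 ∧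
    (a ^ 2 + 2 * a * bx + β ^ 2) - 2 * t * (a * bx + β ^ 2) + t ^ 2 * β ^ 2
      ≤ (2 - α - β + γ) ^ 2 := by
  rw [hγM, le_div_iff₀ hD1] at hM
  rw [hγm, div_le_iff_of_neg hD2] at hm
  rw [← hγt] at hM hm
  constructor
  · rw [← hγt]
    nlinarith [hM, h3, mul_pos h3 h3]
  · rw [← hγt]
    nlinarith [hm, h3, mul_pos h3 h3]

set_option maxHeartbeats 1000000 in
theorem boundary_2CI_coexistence_criterion (a α β : ℝ) (n b : EuclideanSpace ℝ (Fin 3))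
    (hn : ‖n‖ = 1) (hb : ‖b‖ = β)
    (h0 : 0 < a) (h1 : a ≤ α) (h2 : α ≤ 1) (h3 : 0 < β) (h4 : β ≤ 1)
    (bx γM γm : ℝ) (hbx : bx = ⟪n, b⟫)
    (hden1 : α * β - a * bx ≠ 0) (hden2 : α * β - a * bx - 2 * β ≠ 0)
    (hγM : γM = (β / 2) * (α ^ 2 - a ^ 2) / (α * β - a * bx))
    (hγm : γm = (β / 2) * ((2 - α - β) ^ 2 - ‖a • n + b‖ ^ 2) / (α * β - a * bx - 2 * β)) :
    Coexistent (qubitEffect α (a • n)) (qubitEffect β b) ↔ γm ≤ γM := by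
  have hbxle : |bx| ≤ β := by
    rw [hbx]
    calc |⟪n, b⟫| ≤ ‖n‖ * ‖b‖ := abs_real_inner_le_norm n b
      _ = β := by rw [hn, hb]; ring
  have hbx1 : -β ≤ bx := (abs_le.1 hbxle).1
  have hbx2 : bx ≤ β := (abs_le.1 hbxle).2
  have hD1 : 0 < α * β - a * bx := by
    rcases lt_or_eq_of_le (show (0:ℝ) ≤ α * β - a * bx by nlinarith) with h | h
    · exact h
    · exact absurd h.symm hden1
  have hD2 : α * β - a * bx - 2 * β < 0 := by
    rcases lt_or_eq_of_le (show α * β - a * bx - 2 * β ≤ 0 by nlinarith) with h | h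
    · exact h
    · exact absurd h hden2
  have hN : ‖a • n + b‖ ^ 2 = a ^ 2 + 2 * a * bx + β ^ 2 := by
    rw [norm_add_sq_real, norm_smul, real_inner_smul_left, hn, hb, ← hbx]
    simp [Real.norm_eq_abs, abs_of_pos h0]
    ring
  have hns1 : ∀ t : ℝ, ‖a • n - t • b‖ ^ 2 = a ^ 2 - 2 * t * (a * bx) + t ^ 2 * β ^ 2 := by
    intro t
    rw [norm_sub_sq_real, norm_smul, norm_smul, real_inner_smul_left, real_inner_smul_right,
      hn, hb, ← hbx]
    simp [Real.norm_eq_abs, abs_of_pos h0, mul_pow, sq_abs]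
    try ring
    try (rw [sq_abs]; ring)
    try (rw [sq_abs t]; ring)
  have hns2 : ∀ t : ℝ, ‖a • n + b - t • b‖ ^ 2 =
      (a ^ 2 + 2 * a * bx + β ^ 2) - 2 * t * (a * bx + β ^ 2) + t ^ 2 * β ^ 2 := by
    intro t
    rw [norm_sub_sq_real, hN, norm_smul, real_inner_smul_right, inner_add_left,
      real_inner_smul_left, real_inner_self_eq_norm_sq, hb, ← hbx]
    simp [Real.norm_eq_abs, mul_pow, sq_abs]
    try ring
    try (rw [sq_abs]; ring)
    try (rw [sq_abs t]; ring)
  constructor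
  · rintro ⟨G₁, G₂, G₃, G₄, p1, p2, p3, p4, hsum, hA, hB⟩
    obtain ⟨γ, g, rfl⟩ := exists_bloch G₁ p1.1
    have c1 : ‖g‖ ≤ γ := (qubitEffect_psd γ g).1 p1
    have e2 : G₂ = qubitEffect (α - γ) (a • n - g) := by
      have hadd : qubitEffect γ g + qubitEffect (α - γ) (a • n - g) = qubitEffect α (a • n) := by
        rw [qubitEffect_add, show γ + (α - γ) = α by ring, show g + (a • n - g) = a • n by abel]
      apply add_left_cancel (a := qubitEffect γ g)
      rw [hadd]
      exact hA.symm
    have e3 : G₃ = qubitEffect (β - γ) (b - g) := by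
      have hadd : qubitEffect γ g + qubitEffect (β - γ) (b - g) = qubitEffect β b := by
        rw [qubitEffect_add, show γ + (β - γ) = β by ring, show g + (b - g) = b by abel]
      apply add_left_cancel (a := qubitEffect γ g)
      rw [hadd]
      exact hB.symm
    have e4 : G₄ = qubitEffect (2 - α - β + γ) (g - a • n - b) := by
      have hadd : qubitEffect γ g + qubitEffect (α - γ) (a • n - g) + qubitEffect (β - γ) (b - g)
          + qubitEffect (2 - α - β + γ) (g - a • n - b) = 1 := by
        rw [qubitEffect_add, qubitEffect_add, qubitEffect_add,
          show γ + (α - γ) + (β - γ) + (2 - α - β + γ) = 2 by ring,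
          show g + (a • n - g) + (b - g) + (g - a • n - b) = 0 by abel]
        exact qubitEffect_two_zero
      rw [e2, e3] at hsum
      exact add_left_cancel (hsum.trans hadd.symm)
    have c2 : ‖a • n - g‖ ≤ α - γ := (qubitEffect_psd _ _).1 (e2 ▸ p2)
    have c3 : ‖b - g‖ ≤ β - γ := (qubitEffect_psd _ _).1 (e3 ▸ p3)
    have c4 : ‖a • n + b - g‖ ≤ 2 - α - β + γ := by
      have := (qubitEffect_psd _ _).1 (e4 ▸ p4)
      rw [show g - a • n - b = -(a • n + b - g) by abel, norm_neg] at this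
      exact this
    have hγ0 : 0 ≤ γ := le_trans (norm_nonneg g) c1
    have hγβ : γ ≤ β := by linarith [norm_nonneg (b - g), c3]
    have hγα : γ ≤ α := by linarith [norm_nonneg (a • n - g), c2]
    have hCS : ⟪b, g⟫ ≤ β * ‖g‖ := by
      calc ⟪b, g⟫ ≤ ‖b‖ * ‖g‖ := real_inner_le_norm b g
        _ = β * ‖g‖ := by rw [hb]
    have hexp3 : ‖b - g‖ ^ 2 = β ^ 2 - 2 * ⟪b, g⟫ + ‖g‖ ^ 2 := by
      rw [norm_sub_sq_real, hb]
    obtain ⟨hsg, hip⟩ := touch_aux β γ ‖g‖ ⟪b, g⟫ ‖b - g‖ h3 c1 c3 (norm_nonneg _)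
      (norm_nonneg _) hexp3 hCS
    set t := γ / β with htdef
    have hγt : t * β = γ := div_mul_cancel₀ γ (ne_of_gt h3)
    have hgg : g = t • b := by
      have hz : ‖g - t • b‖ ^ 2 = 0 := by
        rw [norm_sub_sq_real, norm_smul, real_inner_smul_right, real_inner_comm, hip, hb,
          Real.norm_eq_abs, abs_of_nonneg (div_nonneg hγ0 h3.le), hsg, htdef]
        field_simp
        ring
      have := norm_eq_zero.1 (pow_eq_zero_iff two_ne_zero |>.1 hz)
      exact sub_eq_zero.1 this
    rw [hgg] at c2 c4
    have hsq2 : a ^ 2 - 2 * t * (a * bx) + t ^ 2 * β ^ 2 ≤ (α - γ) ^ 2 := by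
      rw [← hns1 t]
      exact pow_le_pow_left₀ (norm_nonneg _) c2 2
    have hsq4 : (a ^ 2 + 2 * a * bx + β ^ 2) - 2 * t * (a * bx + β ^ 2) + t ^ 2 * β ^ 2
        ≤ (2 - α - β + γ) ^ 2 := by
      rw [← hns2 t]
      exact pow_le_pow_left₀ (norm_nonneg _) c4 2
    rw [hN] at hγm
    exact sc_fwd a α β bx γ t γM γm h3 hγt hD1 hD2 hγM hγm hsq2 hsq4
  · intro hmM
    rw [hN] at hγm
    have hγM0 : 0 ≤ γM := by
      rw [hγM]
      apply div_nonneg _ hD1.le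
      have : a ^ 2 ≤ α ^ 2 := pow_le_pow_left₀ h0.le h1 2
      have : 0 ≤ β / 2 := by positivity
      nlinarith
    obtain ⟨hγmα, hγmβ⟩ := sc_bwd_ab a α β bx γm h0 h1 h2 h3 h4 hbx1 hbx2 hD2 hγm
    set γ := max γm 0 with hγdef
    have hγ0 : 0 ≤ γ := le_max_right _ _
    have hγm' : γm ≤ γ := le_max_left _ _
    have hγM' : γ ≤ γM := max_le hmM hγM0
    have hγα : γ ≤ α := max_le hγmα (by linarith)
    have hγβ : γ ≤ β := max_le hγmβ h3.le
    set t := γ / β with htdef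
    have hγt : t * β = γ := div_mul_cancel₀ γ (ne_of_gt h3)
    have ht0 : 0 ≤ t := div_nonneg hγ0 h3.le
    have hnorm1 : ‖t • b‖ = γ := by
      rw [norm_smul, hb, Real.norm_eq_abs, abs_of_nonneg ht0, hγt]
    obtain ⟨hsq2, hsq4⟩ := sc_bwd_sq a α β bx γ t γM γm h3 hγt hD1 hD2 hγM hγm hγM' hγm'
    refine ⟨qubitEffect γ (t • b), qubitEffect (α - γ) (a • n - t • b),
      qubitEffect (β - γ) (b - t • b), qubitEffect (2 - α - β + γ) (t • b - a • n - b),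
      ?_, ?_, ?_, ?_, ?_, ?_, ?_⟩
    · exact (qubitEffect_psd _ _).2 (le_of_eq hnorm1)
    · refine (qubitEffect_psd _ _).2 ?_
      refine le_of_sq_le_sq' ?_ (norm_nonneg _) (by linarith)
      rw [hns1 t]
      exact hsq2
    · refine (qubitEffect_psd _ _).2 ?_
      rw [show b - t • b = (1 - t) • b from by rw [sub_smul, one_smul],
        norm_smul, hb, Real.norm_eq_abs, abs_of_nonneg (by
          rw [htdef]
          rw [sub_nonneg]
          exact (div_le_one h3).2 hγβ)]
      nlinarith [hγt]
    · refine (qubitEffect_psd _ _).2 ?_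
      rw [show t • b - a • n - b = -(a • n + b - t • b) from by abel, norm_neg]
      refine le_of_sq_le_sq' ?_ (norm_nonneg _) (by linarith)
      rw [hns2 t]
      exact hsq4
    · rw [qubitEffect_add, qubitEffect_add, qubitEffect_add,
        show γ + (α - γ) + (β - γ) + (2 - α - β + γ) = 2 by ring,
        show t • b + (a • n - t • b) + (b - t • b) + (t • b - a • n - b) = 0 by abel]
      exact qubitEffect_two_zero
    · rw [qubitEffect_add, show γ + (α - γ) = α by ring,
        show t • b + (a • n - t • b) = a • n by abel]
    · rw [qubitEffect_add, show γ + (β - γ) = β by ring,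
        show t • b + (b - t • b) = b by abel]
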